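/- arXiv:1109.6643 — 5 statements merged into one kernel-verified Lean document; each statement's English description precedes it below -/
import Mathlib

section
/- For any LRU stack-depth distribution s and buffer capacity C, the stochastic competitive ratio χ[s] = M^LPR[s] / M^OPT[s] between the expected miss rate of the optimal online policy LPR and that of OPT satisfies χ[s] = O(ln C). Moreover, if M^LPR[s] ≥ 1/C, then χ[s] = O(ln(1/M^LPR[s])). -/
/-- Cumulative stack-depth distribution `S(j) = ∑_{i=1}^j s i`. -/
noncomputable def cumS (s : ℕ → ℝ) (j : ℕ) : ℝ :=
  ∑ i ∈ Finset.Icc 1 j, s i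

/-- `L^OPT = max_{G ∈ {1,…,V-C}} G · (∑_{j=0}^{C+G-1} 1/(1-S(j)))⁻¹`,
a lower bound on the OPT miss rate. -/
noncomputable def LOPTc (S : ℕ → ℝ) (V C : ℕ) : ℝ :=
  sSup ((fun G : ℕ => (G : ℝ) / ∑ j ∈ Finset.range (C + G), 1 / (1 - S j))
    '' Set.Icc 1 (V - C))

/-- Miss rate of the LPR policy: the optimum over the `K-L` policies,
`M^LPR[s] = min_{1 ≤ K < C ≤ L ≤ V} 1 - [S(K)(L-C) + S(L)(C-K)]/(L-K)`. -/
noncomputable def MLPR (s : ℕ → ℝ) (V C : ℕ) : ℝ :=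
  sInf {x : ℝ | ∃ K L : ℕ, 1 ≤ K ∧ K < C ∧ C ≤ L ∧ L ≤ V ∧
    x = 1 - (cumS s K * ((L : ℝ) - C) + cumS s L * ((C : ℝ) - K)) / ((L : ℝ) - K)}

/-!
Write `m = M^LPR` and `S = cumS s`. Since every `K-L` policy bounds `m` from above,
`m (L - K) ≤ (L - C)(1 - S K) + (C - K)(1 - S L)` for all admissible `K, L`.
Let `D ≥ 1` be the first offset with `1 - S (C + D) ≤ m/2`. The constraint with `L = C + D` gives
`1 - S j ≥ m (2D + C - j) / (2D)` for `1 ≤ j < C`, while `1 - S j > m/2` for `C ≤ j < C + D`;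
a harmonic-sum estimate then bounds the sum in `L^OPT` at `G = D` by
`1 + (2D/m) (log (1 + (C-1)/(2D)) + 1)`, whence `m / M^OPT ≤ 3 + 2 log (1 + (C-1)/(2D))`.
The constraint with `K = 1` also gives `m (C - 1) ≤ 2D`, so this logarithm is at most both
`log C` and `log (2/m)`.
-/

open Finset Real

lemma sum_range_one_div_add_sub_le_log {A : ℝ} (hA : 0 < A) (n : ℕ) :
    ∑ i ∈ range n, 1 / (A + ((n : ℝ) - i)) ≤ log (1 + n / A) := by
  induction n with
  | zero => simp
  | succ n ih =>
    have hAn : 0 < A + n := by positivity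
    have hstep : 1 / (A + (n + 1)) ≤ log ((A + (n + 1)) / (A + n)) := by
      have h := one_sub_inv_le_log_of_pos (div_pos (by positivity : 0 < A + (n + 1)) hAn)
      rwa [inv_div, one_sub_div (by positivity), add_sub_add_left_eq_sub, add_sub_cancel_left]
        at h
    have hlog : log (1 + (n + 1 : ℝ) / A) = log (1 + n / A) + log ((A + (n + 1)) / (A + n)) := by
      rw [← log_mul (by positivity) (by positivity)]
      congr 1
      field_simp
    rw [sum_range_succ']
    push_cast
    simp only [add_sub_add_right_eq_sub, sub_zero, hlog]
    linarith

lemma one_div_le_of_mul_add_le {a b d x m : ℝ} (hm : 0 < m) (hd : 0 < d) (hx : 0 ≤ x)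
    (h : m * (x + d) ≤ d * a + x * b) (hb : b ≤ m / 2) :
    1 / a ≤ 2 * d / m / (2 * d + x) := by
  have ha : m * (2 * d + x) / (2 * d) ≤ a := by
    rw [div_le_iff₀ (by positivity)]
    nlinarith
  calc 1 / a ≤ 1 / (m * (2 * d + x) / (2 * d)) := one_div_le_one_div_of_le (by positivity) ha
    _ = 2 * d / m / (2 * d + x) := by
      field_simp

lemma Nat.exists_first_le {f : ℕ → ℝ} {a : ℝ} {N : ℕ} (h0 : a < f 0) (hN : f N ≤ a) :
    ∃ D, 0 < D ∧ D ≤ N ∧ f D ≤ a ∧ ∀ i < D, a < f i := by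
  classical
  have hex : ∃ n, f n ≤ a := ⟨N, hN⟩
  refine ⟨Nat.find hex, Nat.pos_of_ne_zero fun h => ?_, Nat.find_min' hex hN, Nat.find_spec hex,
    fun i hi => not_le.1 (Nat.find_min hex hi)⟩
  exact (h ▸ Nat.find_spec hex).not_gt h0

lemma three_add_two_mul_le_seven_mul {y : ℝ} (hy : log 2 ≤ y) : 3 + 2 * y ≤ 7 * y := by
  linarith [log_two_gt_d9]

section CumS

variable {s : ℕ → ℝ}

lemma cumS_zero (s : ℕ → ℝ) : cumS s 0 = 0 := by
  simp [cumS]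

lemma cumS_mono (hs : ∀ i, 0 ≤ s i) : Monotone (cumS s) := fun _ _ h =>
  sum_le_sum_of_subset_of_nonneg (Icc_subset_Icc_right h) fun i _ _ => hs i

lemma cumS_nonneg (hs : ∀ i, 0 ≤ s i) (j : ℕ) : 0 ≤ cumS s j :=
  sum_nonneg fun i _ => hs i

lemma cumS_le_one {V j : ℕ} (hs : ∀ i, 0 ≤ s i) (hsum : ∑ i ∈ Icc 1 V, s i = 1) (hj : j ≤ V) :
    cumS s j ≤ 1 :=
  hsum ▸ cumS_mono hs hj

end CumS

section MLPR

variable {s : ℕ → ℝ} {V C K L : ℕ}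

lemma kl_missRate_nonneg (hs : ∀ i, 0 ≤ s i) (hsum : ∑ i ∈ Icc 1 V, s i = 1)
    (hKC : K < C) (hCL : C ≤ L) (hLV : L ≤ V) :
    0 ≤ 1 - (cumS s K * ((L : ℝ) - C) + cumS s L * ((C : ℝ) - K)) / ((L : ℝ) - K) := by
  have hKC' : (K : ℝ) < C := by exact_mod_cast hKC
  have hCL' : (C : ℝ) ≤ L := by exact_mod_cast hCL
  have hK1 := cumS_le_one hs hsum (hKC.le.trans (hCL.trans hLV))
  have hL1 := cumS_le_one hs hsum hLV
  rw [sub_nonneg, div_le_one (by linarith)]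
  nlinarith [cumS_nonneg hs K, cumS_nonneg hs L]

lemma MLPR_nonneg (hs : ∀ i, 0 ≤ s i) (hsum : ∑ i ∈ Icc 1 V, s i = 1) (hC : 2 ≤ C)
    (hCV : C ≤ V) : 0 ≤ MLPR s V C :=
  le_csInf ⟨_, C - 1, C, by omega, by omega, le_rfl, hCV, rfl⟩ <| by
    rintro _ ⟨K, L, -, hKC, hCL, hLV, rfl⟩
    exact kl_missRate_nonneg hs hsum hKC hCL hLV

lemma MLPR_mul_sub_le (hs : ∀ i, 0 ≤ s i) (hsum : ∑ i ∈ Icc 1 V, s i = 1)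
    (hK : 1 ≤ K) (hKC : K < C) (hCL : C ≤ L) (hLV : L ≤ V) :
    MLPR s V C * ((L : ℝ) - K) ≤
      ((L : ℝ) - C) * (1 - cumS s K) + ((C : ℝ) - K) * (1 - cumS s L) := by
  have hLK : (0 : ℝ) < (L : ℝ) - K := by
    have : (K : ℝ) < L := by exact_mod_cast hKC.trans_le hCL
    linarith
  have hle : MLPR s V C ≤
      1 - (cumS s K * ((L : ℝ) - C) + cumS s L * ((C : ℝ) - K)) / ((L : ℝ) - K) := by
    refine csInf_le ⟨0, ?_⟩ ⟨K, L, hK, hKC, hCL, hLV, rfl⟩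
    rintro _ ⟨K, L, -, hKC, hCL, hLV, rfl⟩
    exact kl_missRate_nonneg hs hsum hKC hCL hLV
  calc MLPR s V C * ((L : ℝ) - K)
      ≤ (1 - (cumS s K * ((L : ℝ) - C) + cumS s L * ((C : ℝ) - K)) / ((L : ℝ) - K)) *
          ((L : ℝ) - K) := mul_le_mul_of_nonneg_right hle hLK.le
    _ = ((L : ℝ) - C) * (1 - cumS s K) + ((C : ℝ) - K) * (1 - cumS s L) := by
      field_simp
      ring

lemma MLPR_le_one_sub_cumS (hs : ∀ i, 0 ≤ s i) (hsum : ∑ i ∈ Icc 1 V, s i = 1) (hC : 2 ≤ C)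
    (hCV : C ≤ V) : MLPR s V C ≤ 1 - cumS s C := by
  have h := MLPR_mul_sub_le hs hsum (K := C - 1) (by omega) (by omega) le_rfl hCV
  rw [Nat.cast_sub (by omega : 1 ≤ C)] at h
  simpa only [Nat.cast_one, sub_sub_cancel, sub_self, zero_mul, zero_add, mul_one, one_mul] using h

end MLPR

lemma sum_range_one_div_one_sub_le {S : ℕ → ℝ} {m : ℝ} {n D : ℕ} (hm : 0 < m) (hD : 0 < D)
    (hS0 : S 0 = 0) (hleft : ∀ i < n, 1 / (1 - S (i + 1)) ≤ 2 * D / m / (2 * D + ((n : ℝ) - i)))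
    (hmid : ∀ i < D, m / 2 < 1 - S (n + 1 + i)) :
    ∑ j ∈ range (n + 1 + D), 1 / (1 - S j) ≤ 1 + 2 * D / m * (log (1 + n / (2 * D)) + 1) := by
  have hleftSum : ∑ i ∈ range n, 1 / (1 - S (i + 1)) ≤ 2 * D / m * log (1 + n / (2 * D)) :=
    calc ∑ i ∈ range n, 1 / (1 - S (i + 1))
        ≤ ∑ i ∈ range n, 2 * D / m * (1 / (2 * D + ((n : ℝ) - i))) :=
          sum_le_sum fun i hi => (hleft i (mem_range.1 hi)).trans_eq (div_eq_mul_one_div _ _)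
      _ = 2 * D / m * ∑ i ∈ range n, 1 / (2 * D + ((n : ℝ) - i)) := (mul_sum _ _ _).symm
      _ ≤ 2 * D / m * log (1 + n / (2 * D)) :=
          mul_le_mul_of_nonneg_left (sum_range_one_div_add_sub_le_log (by positivity) n)
            (by positivity)
  have hmidSum : ∑ i ∈ range D, 1 / (1 - S (n + 1 + i)) ≤ 2 * D / m := by
    have h := sum_le_card_nsmul (range D) (fun i => 1 / (1 - S (n + 1 + i))) (2 / m) fun i hi =>
      (one_div_le_one_div_of_le (by positivity) (hmid i (mem_range.1 hi)).le).trans_eq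
        (one_div_div m 2)
    rw [card_range, nsmul_eq_mul] at h
    exact h.trans_eq (by ring)
  rw [sum_range_add, sum_range_succ', hS0, sub_zero, div_one]
  linarith [mul_add_one (2 * D / m) (log (1 + n / (2 * D)))]

lemma div_sum_le_LOPTc (S : ℕ → ℝ) {V C D : ℕ} (hD : 0 < D) (hDV : D ≤ V - C) :
    (D : ℝ) / ∑ j ∈ range (C + D), 1 / (1 - S j) ≤ LOPTc S V C :=
  le_csSup ((Set.finite_Icc 1 (V - C)).image _).bddAbove ⟨D, ⟨hD, hDV⟩, rfl⟩

section Ratio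

variable {s : ℕ → ℝ} {V C : ℕ} {MOPT : ℝ}

lemma MLPR_div_le_of_drop (hs : ∀ i, 0 ≤ s i) (hsum : ∑ i ∈ Icc 1 V, s i = 1) (hC : 2 ≤ C)
    {D : ℕ} (hD : 0 < D) (hDV : D ≤ V - C) (hm : 0 < MLPR s V C)
    (hdrop : 1 - cumS s (C + D) ≤ MLPR s V C / 2)
    (hmid : ∀ i < D, MLPR s V C / 2 < 1 - cumS s (C + i))
    (hM : 0 < MOPT) (hL : LOPTc (cumS s) V C ≤ MOPT) :
    MLPR s V C / MOPT ≤ 3 + 2 * log (1 + ((C : ℝ) - 1) / (2 * D)) := by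
  obtain ⟨n, rfl⟩ : ∃ n, C = n + 1 := ⟨C - 1, by omega⟩
  rw [show ((n + 1 : ℕ) : ℝ) - 1 = n by push_cast; ring]
  set m := MLPR s V (n + 1)
  set Λ := log (1 + n / (2 * D))
  have hΛ : 0 ≤ Λ := log_nonneg (by simp only [le_add_iff_nonneg_right]; positivity)
  have hm1 : m ≤ 1 := (MLPR_le_one_sub_cumS hs hsum hC (by omega)).trans
    (by linarith [cumS_nonneg hs (n + 1)])
  have hleft (i : ℕ) (hi : i < n) :
      1 / (1 - cumS s (i + 1)) ≤ 2 * D / m / (2 * D + ((n : ℝ) - i)) := by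
    have h := MLPR_mul_sub_le hs hsum (C := n + 1) (K := i + 1) (L := n + 1 + D)
      (by omega) (by omega) (by omega) (by omega)
    push_cast at h
    refine one_div_le_of_mul_add_le hm (by positivity) (sub_nonneg.2 (by exact_mod_cast hi.le))
      ?_ hdrop
    linarith
  have hT := sum_range_one_div_one_sub_le hm hD (cumS_zero s) hleft hmid
  set T := ∑ j ∈ range (n + 1 + D), 1 / (1 - cumS s j)
  have hT1 : 1 ≤ T := by
    have h := single_le_sum (f := fun j => 1 / (1 - cumS s j))
      (fun j hj => one_div_nonneg.2 <| sub_nonneg.2 <|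
        cumS_le_one hs hsum (by rw [mem_range] at hj; omega))
      (mem_range.2 (by omega : 0 < n + 1 + D))
    simpa only [cumS_zero, sub_zero, div_one] using h
  have hmT : m * T ≤ (3 + 2 * Λ) * D :=
    calc m * T ≤ m * (1 + 2 * D / m * (Λ + 1)) := mul_le_mul_of_nonneg_left hT hm.le
      _ = m + 2 * D * (Λ + 1) := by field_simp
      _ ≤ (3 + 2 * Λ) * D := by nlinarith [(Nat.one_le_cast (α := ℝ)).2 hD]
  rw [div_le_iff₀ hM]
  calc m ≤ (3 + 2 * Λ) * (D / T) := by
        rw [mul_div_assoc', le_div_iff₀ (by linarith)]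
        exact hmT
    _ ≤ (3 + 2 * Λ) * MOPT :=
        mul_le_mul_of_nonneg_left ((div_sum_le_LOPTc _ hD hDV).trans hL) (by positivity)

lemma MLPR_div_le_three_add_two_mul_log (hs : ∀ i, 0 ≤ s i) (hsum : ∑ i ∈ Icc 1 V, s i = 1)
    (hC : 2 ≤ C) (hCV : C < V) (hM : 0 < MOPT) (hL : LOPTc (cumS s) V C ≤ MOPT)
    (hm : 0 < MLPR s V C) :
    MLPR s V C / MOPT ≤ 3 + 2 * log C ∧ MLPR s V C / MOPT ≤ 3 + 2 * log (2 / MLPR s V C) := by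
  set m := MLPR s V C
  have hmC := MLPR_le_one_sub_cumS hs hsum hC hCV.le
  have hm1 : m ≤ 1 := hmC.trans (by linarith [cumS_nonneg hs C])
  have hV : 1 - cumS s (C + (V - C)) ≤ m / 2 := by
    rw [Nat.add_sub_cancel' hCV.le, cumS, hsum, sub_self]
    positivity
  obtain ⟨D, hD, hDV, hdrop, hmid⟩ := Nat.exists_first_le (f := fun i => 1 - cumS s (C + i))
    (by simpa using (half_lt_self hm).trans_le hmC) hV
  have hratio := MLPR_div_le_of_drop hs hsum hC hD hDV hm hdrop hmid hM hL
  have hD1 : (1 : ℝ) ≤ D := Nat.one_le_cast.2 hD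
  have hC1 : (1 : ℝ) ≤ C := by exact_mod_cast (by omega : 1 ≤ C)
  have hmD : m * ((C : ℝ) - 1) ≤ 2 * D := by
    have h := MLPR_mul_sub_le hs hsum (C := C) (K := 1) (L := C + D) le_rfl (by omega) (by omega)
      (by omega)
    push_cast at h
    nlinarith [cumS_nonneg hs 1, mul_le_mul_of_nonneg_left hdrop (sub_nonneg.2 hC1)]
  refine ⟨hratio.trans ?_, hratio.trans ?_⟩ <;> gcongr 3 + 2 * ?_ <;>
    refine log_le_log (by positivity) ?_
  · linarith [div_le_self (sub_nonneg.2 hC1) (by linarith : (1 : ℝ) ≤ 2 * D)]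
  · have h1 : ((C : ℝ) - 1) / (2 * D) ≤ 1 / m := by
      rw [div_le_div_iff₀ (by positivity) hm]
      linarith
    have h2 : 1 ≤ 1 / m := by rw [le_div_iff₀ hm]; linarith
    linarith [show 2 / m = 1 / m + 1 / m by ring]

end Ratio

/-- The stochastic competitive ratio `χ[s] = M^LPR[s]/M^OPT[s]` is `O(ln C)` for every
stack distribution `s` and capacity `C`; moreover, if `M^LPR[s] ≥ 1/C`, then
`χ[s] = O(ln(1/M^LPR[s]))` (in the sharper form `χ[s] ≤ c·ln(2/M^LPR[s])`).
`MOPT` is any value of the OPT miss rate, which always satisfies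
`MOPT ≥ L^OPT[s]`. -/
theorem stmt11 :
    ∃ c : ℝ, 0 < c ∧
      ∀ (V C : ℕ) (s : ℕ → ℝ), 2 ≤ C → C < V →
        (∀ i, 0 ≤ s i) → (∑ j ∈ Finset.Icc 1 V, s j) = 1 →
        (∀ j, j < V → cumS s j < 1) →
        ∀ MOPT : ℝ, 0 < MOPT → LOPTc (cumS s) V C ≤ MOPT →
          MLPR s V C / MOPT ≤ c * Real.log C ∧
          (1 / (C : ℝ) ≤ MLPR s V C →
            MLPR s V C / MOPT ≤ c * Real.log (2 / MLPR s V C)) := by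
  refine ⟨7, by norm_num, fun V C s hC hCV hs hsum _ MOPT hM hL => ?_⟩
  have hC2 : (2 : ℝ) ≤ C := by exact_mod_cast hC
  rcases (MLPR_nonneg hs hsum hC hCV.le).eq_or_lt with hm | hm
  · -- the second bound reads `0 ≤ 7 * log (2 / 0)`, i.e. `0 ≤ 0`, as `log 0 = 0`
    rw [← hm, zero_div, div_zero, log_zero, mul_zero]
    exact ⟨by linarith [log_nonneg (by linarith : (1 : ℝ) ≤ C)], fun _ => le_rfl⟩
  obtain ⟨hlogC, hlogm⟩ := MLPR_div_le_three_add_two_mul_log hs hsum hC hCV hM hL hm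
  have hm1 := (MLPR_le_one_sub_cumS hs hsum hC hCV.le).trans (sub_le_self 1 (cumS_nonneg hs C))
  refine ⟨hlogC.trans (three_add_two_mul_le_seven_mul (log_le_log two_pos hC2)),
    fun _ => hlogm.trans (three_add_two_mul_le_seven_mul (log_le_log two_pos ?_))⟩
  rw [le_div_iff₀ hm]
  linarith
end

section
/- Critical-pair preservation under LRU: if binary vectors y and z form a critical pair (y = 1ν1ι0σ and z = 1ν0ι1σ with σ all-zeros), then for every access depth d, the states y' and z' obtained by applying the LRU transition (rotate the prefix of length d, then on a miss evict the deepest buffered item) satisfy y' = z' or y' <_c z'. -/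
/-!
Rotating the prefix of length `d` moves the item at depth `i` to position `rotdPos d i`, a
bijection that is monotone away from `d`. If `y` hits, then either `d = p`, and evicting `q` from
the rotated `z` reproduces the rotated `y`, or `z` hits as well and the rotated pair is again
critical. If `y` misses, both successors come from `W`, the rotated `y` with position `1` set:
`y'` clears the image of the deepest buffered item `m ∈ [p, q)` of `y`, while `z'` clears the
image of `p`. They coincide when `m = p` and otherwise form a critical pair.
-/

/-- `R_d(x)`: unit right cyclic shift of the prefix of length `d` of the state `x`
(the state is a binary vector over LRU stack positions `1,…,V`). -/
def rotd (d : ℕ) (x : ℕ → Bool) : ℕ → Bool :=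
  fun j => if j = 1 then x d else if j ≤ d then x (j - 1) else x j

/-- One LRU transition on access depth `d`: rotate the prefix of length `d`; on a hit
(`x d = true`) nothing else happens; on a miss the accessed item enters position 1
and the deepest buffered item is evicted. -/
def lruStep (V d : ℕ) (x : ℕ → Bool) : ℕ → Bool :=
  let y := rotd d x
  if x d then y
  else fun j =>
    if j = 1 then true
    else if j = (WithBot.unbotD 0 ((Finset.Icc 2 V).filter fun i => y i = true).max) then false
    else y j

/-- `y <_c z`: `y = 1ν1ι0σ` and `z = 1ν0ι1σ` with `σ` all-zeros, i.e. `y` and `z`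
agree except at two positions `p < q` where `y p = 1, y q = 0, z p = 0, z q = 1`,
and everything strictly below `q` is `0`. -/
def CritPair (V : ℕ) (y z : ℕ → Bool) : Prop :=
  ∃ p q, 2 ≤ p ∧ p < q ∧ q ≤ V ∧
    y 1 = true ∧ z 1 = true ∧
    y p = true ∧ y q = false ∧ z p = false ∧ z q = true ∧
    (∀ r, r ≠ p → r ≠ q → y r = z r) ∧
    (∀ r, q < r → y r = false)

open Function

-- Position `0` is not a stack position; fixing it makes `rotdPos d` a bijection of `ℕ`.
def rotdPos (d i : ℕ) : ℕ :=
  if i = 0 then 0 else if i = d then 1 else if i < d then i + 1 else i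

section Rotation

variable {d : ℕ}

theorem rotd_rotdPos (hd : 1 ≤ d) (x : ℕ → Bool) (i : ℕ) : rotd d x (rotdPos d i) = x i := by
  unfold rotd rotdPos
  split_ifs <;> first | rfl | contradiction | (congr 1; omega)

theorem rotdPos_self (hd : 1 ≤ d) : rotdPos d d = 1 := by
  unfold rotdPos; split_ifs <;> omega

theorem rotdPos_surjective (hd : 1 ≤ d) : Surjective (rotdPos d) := by
  intro r
  rcases Nat.lt_or_ge r 2 with hr | hr
  · interval_cases r
    · exact ⟨0, rfl⟩
    · exact ⟨d, rotdPos_self hd⟩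
  · rcases le_or_gt r d with hrd | hrd
    · exact ⟨r - 1, by unfold rotdPos; split_ifs <;> omega⟩
    · exact ⟨r, by unfold rotdPos; split_ifs <;> omega⟩

theorem rotdPos_lt_rotdPos {i j : ℕ} (hi : i ≠ d) (hj : j ≠ d) (hij : i < j) :
    rotdPos d i < rotdPos d j := by
  unfold rotdPos; split_ifs <;> omega

theorem rotdPos_le_rotdPos {i j : ℕ} (hi : i ≠ d) (hj : j ≠ d) (hij : i ≤ j) :
    rotdPos d i ≤ rotdPos d j := by
  rcases hij.eq_or_lt with rfl | hlt
  · rfl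
  · exact (rotdPos_lt_rotdPos hi hj hlt).le

theorem two_le_rotdPos (hd : 1 ≤ d) {i : ℕ} (hi : 1 ≤ i) (hid : i ≠ d) : 2 ≤ rotdPos d i := by
  unfold rotdPos; split_ifs <;> omega

theorem rotdPos_le {V i : ℕ} (hd : 1 ≤ d) (hdV : d ≤ V) (hiV : i ≤ V) : rotdPos d i ≤ V := by
  unfold rotdPos; split_ifs <;> omega

theorem rotdPos_of_lt {i : ℕ} (h : d < i) : rotdPos d i = i := by
  unfold rotdPos; split_ifs <;> omega

theorem rotd_eq_rotd_of_ne (hd : 1 ≤ d) {y z : ℕ → Bool} {p q : ℕ}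
    (h : ∀ r, r ≠ p → r ≠ q → y r = z r) (r : ℕ) (hp : r ≠ rotdPos d p) (hq : r ≠ rotdPos d q) :
    rotd d y r = rotd d z r := by
  obtain ⟨i, rfl⟩ := rotdPos_surjective hd r
  rw [rotd_rotdPos hd, rotd_rotdPos hd]
  exact h i (by rintro rfl; exact hp rfl) (by rintro rfl; exact hq rfl)

theorem rotd_eq_false_of_rotdPos_lt (hd : 1 ≤ d) {x : ℕ → Bool} {m : ℕ} (hm : m ≠ d)
    (h : ∀ r, m < r → x r = false) {r : ℕ} (hr : rotdPos d m < r) : rotd d x r = false := by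
  obtain ⟨i, rfl⟩ := rotdPos_surjective hd r
  rw [rotd_rotdPos hd]
  apply h
  unfold rotdPos at hr
  split_ifs at hr <;> omega

end Rotation

theorem unbotD_max_filter_Icc_eq {x : ℕ → Bool} {a V m : ℕ} (ha : a ≤ m) (hV : m ≤ V) (hm : x m = true)
    (h : ∀ r, m < r → x r = false) :
    WithBot.unbotD 0 ((Finset.Icc a V).filter fun i => x i = true).max = m := by
  suffices ((Finset.Icc a V).filter fun i => x i = true).max = WithBot.some m by
    rw [this, WithBot.unbotD_coe]
  apply le_antisymm
  · refine Finset.max_le fun b hb => WithBot.coe_le_coe.mpr ?_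
    simp only [Finset.mem_filter, Finset.mem_Icc] at hb
    by_contra! hlt
    simp [h b hlt] at hb
  · exact Finset.le_max (by simp [ha, hV, hm])

theorem lruStep_of_hit {V d : ℕ} {x : ℕ → Bool} (h : x d = true) : lruStep V d x = rotd d x := by
  simp [lruStep, h]

theorem lruStep_of_miss {V d M : ℕ} {x : ℕ → Bool} (h : x d = false) (hM2 : 2 ≤ M) (hMV : M ≤ V)
    (hM : rotd d x M = true) (htail : ∀ r, M < r → rotd d x r = false) :
    lruStep V d x = update (update (rotd d x) 1 true) M false := by
  funext j
  simp only [lruStep, h, Bool.false_eq_true, if_false, unbotD_max_filter_Icc_eq hM2 hMV hM htail,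
    update_apply]
  split_ifs <;> first | rfl | omega

theorem update_eq_or_critPair {W : ℕ → Bool} {V P M : ℕ} (hP : 2 ≤ P) (hPM : P ≤ M) (hMV : M ≤ V)
    (h1 : W 1 = true) (hWP : W P = true) (hWM : W M = true) (htail : ∀ r, M < r → W r = false) :
    update W M false = update W P false ∨ CritPair V (update W M false) (update W P false) := by
  rcases hPM.eq_or_lt with rfl | hlt
  · exact Or.inl rfl
  refine Or.inr ⟨P, M, hP, hlt, hMV, ?_, ?_, ?_, ?_, ?_, ?_, ?_, ?_⟩ <;>
    simp_all [update_apply] <;> omega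

structure IsCritPairAt (V : ℕ) (y z : ℕ → Bool) (p q : ℕ) : Prop where
  two_le : 2 ≤ p
  lt : p < q
  le : q ≤ V
  fst_one : y 1 = true
  snd_one : z 1 = true
  fst_p : y p = true
  fst_q : y q = false
  snd_p : z p = false
  snd_q : z q = true
  eq_of_ne : ∀ r, r ≠ p → r ≠ q → y r = z r
  fst_eq_false : ∀ r, q < r → y r = false

theorem critPair_iff {V : ℕ} {y z : ℕ → Bool} : CritPair V y z ↔ ∃ p q, IsCritPairAt V y z p q :=
  ⟨fun ⟨p, q, h₁, h₂, h₃, h₄, h₅, h₆, h₇, h₈, h₉, h₁₀, h₁₁⟩ =>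
    ⟨p, q, h₁, h₂, h₃, h₄, h₅, h₆, h₇, h₈, h₉, h₁₀, h₁₁⟩,
   fun ⟨p, q, h₁, h₂, h₃, h₄, h₅, h₆, h₇, h₈, h₉, h₁₀, h₁₁⟩ =>
    ⟨p, q, h₁, h₂, h₃, h₄, h₅, h₆, h₇, h₈, h₉, h₁₀, h₁₁⟩⟩

namespace IsCritPairAt

variable {V d p q : ℕ} {y z : ℕ → Bool} (h : IsCritPairAt V y z p q)
include h

theorem snd_eq_false {r : ℕ} (hr : q < r) : z r = false := by
  rw [← h.eq_of_ne r (by have := h.lt; omega) hr.ne']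
  exact h.fst_eq_false r hr

theorem exists_deepest : ∃ m, p ≤ m ∧ m < q ∧ y m = true ∧ ∀ r, m < r → y r = false := by
  set m := Nat.findGreatest (fun r => y r = true) q
  have hym : y m = true := Nat.findGreatest_spec (P := fun r => y r = true) h.lt.le h.fst_p
  have hmq : m ≠ q := fun hmq => by simp [hmq, h.fst_q] at hym
  refine ⟨m, Nat.le_findGreatest h.lt.le h.fst_p, (Nat.findGreatest_le q).lt_of_ne hmq, hym,
    fun r hr => ?_⟩
  rcases le_or_gt r q with hrq | hrq
  · simpa using Nat.findGreatest_is_greatest hr hrq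
  · exact h.fst_eq_false r hrq

theorem lruStep_p_eq (hd : 1 ≤ p) : lruStep V p y = lruStep V p z := by
  have hpq := h.lt
  have hq : rotdPos p q = q := rotdPos_of_lt hpq
  rw [lruStep_of_hit h.fst_p, lruStep_of_miss h.snd_p (M := q) (by omega) h.le
    (by rw [← hq, rotd_rotdPos hd]; exact h.snd_q)
    (fun r hr => rotd_eq_false_of_rotdPos_lt hd hpq.ne' (fun _ => h.snd_eq_false) (by rwa [hq]))]
  funext r
  simp only [update_apply]
  split_ifs with hrq hr1
  · rw [hrq, ← hq, rotd_rotdPos hd, h.fst_q]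
  · rw [hr1, ← rotdPos_self hd, rotd_rotdPos hd, h.fst_p]
  · exact rotd_eq_rotd_of_ne hd h.eq_of_ne r (by rwa [rotdPos_self hd]) (by rwa [hq])

theorem snd_eq_true_of_ne (hdp : d ≠ p) (hyd : y d = true) : z d = true := by
  rwa [← h.eq_of_ne d hdp (by rintro rfl; simp [h.fst_q] at hyd)]

theorem rotd_of_hit (hd : 1 ≤ d) (hdV : d ≤ V) (hdp : d ≠ p) (hyd : y d = true) :
    IsCritPairAt V (rotd d y) (rotd d z) (rotdPos d p) (rotdPos d q) := by
  have hdq : d ≠ q := by rintro rfl; simp [h.fst_q] at hyd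
  have hpq := h.lt
  exact
    { two_le := two_le_rotdPos hd (by have := h.two_le; omega) hdp.symm
      lt := rotdPos_lt_rotdPos hdp.symm hdq.symm hpq
      le := rotdPos_le hd hdV h.le
      fst_one := by rwa [← rotdPos_self hd, rotd_rotdPos hd]
      snd_one := by rw [← rotdPos_self hd, rotd_rotdPos hd, h.snd_eq_true_of_ne hdp hyd]
      fst_p := by rw [rotd_rotdPos hd, h.fst_p]
      fst_q := by rw [rotd_rotdPos hd, h.fst_q]
      snd_p := by rw [rotd_rotdPos hd, h.snd_p]
      snd_q := by rw [rotd_rotdPos hd, h.snd_q]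
      eq_of_ne := rotd_eq_rotd_of_ne hd h.eq_of_ne
      fst_eq_false := fun _ => rotd_eq_false_of_rotdPos_lt hd hdq.symm h.fst_eq_false }

theorem lruStep_snd_of_fst_miss (hd : 1 ≤ d) (hdV : d ≤ V) (hyd : y d = false) :
    lruStep V d z = update (update (rotd d y) 1 true) (rotdPos d p) false := by
  have hpq := h.lt
  have hp := h.two_le
  have hdp : p ≠ d := by rintro rfl; simp [h.fst_p] at hyd
  have hagree := rotd_eq_rotd_of_ne hd h.eq_of_ne
  by_cases hdq : d = q
  · subst hdq
    rw [lruStep_of_hit h.snd_q]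
    funext r
    simp only [update_apply]
    split_ifs with hrp hr1
    · rw [hrp, rotd_rotdPos hd, h.snd_p]
    · rw [hr1, ← rotdPos_self hd, rotd_rotdPos hd, h.snd_q]
    · exact (hagree r hrp (by rwa [rotdPos_self hd])).symm
  · have hzd : z d = false := by rw [← h.eq_of_ne d (Ne.symm hdp) hdq, hyd]
    have hQ : 2 ≤ rotdPos d q := two_le_rotdPos hd (by omega) (Ne.symm hdq)
    have hPQ := rotdPos_lt_rotdPos hdp (Ne.symm hdq) hpq
    rw [lruStep_of_miss hzd hQ (rotdPos_le hd hdV h.le) (by rw [rotd_rotdPos hd, h.snd_q])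
      (fun _ => rotd_eq_false_of_rotdPos_lt hd (Ne.symm hdq) (fun _ => h.snd_eq_false))]
    funext r
    simp only [update_apply]
    have hP := two_le_rotdPos hd (by omega) hdp
    by_cases hrq : r = rotdPos d q
    · rw [if_pos hrq, if_neg (by omega), if_neg (by omega), hrq, rotd_rotdPos hd, h.fst_q]
    by_cases hrp : r = rotdPos d p
    · rw [if_neg hrq, if_neg (by omega), if_pos hrp, hrp, rotd_rotdPos hd, h.snd_p]
    rw [if_neg hrq, if_neg hrp, hagree r hrp hrq]

theorem lruStep_eq_or_critPair_of_fst_miss (hd : 1 ≤ d) (hdV : d ≤ V) (hyd : y d = false) :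
    lruStep V d y = lruStep V d z ∨ CritPair V (lruStep V d y) (lruStep V d z) := by
  obtain ⟨m, hpm, hmq, hym, hmtail⟩ := h.exists_deepest
  have hp := h.two_le
  have hdp : p ≠ d := by rintro rfl; simp [h.fst_p] at hyd
  have hmd : m ≠ d := by rintro rfl; simp [hym] at hyd
  have hP := two_le_rotdPos hd (by omega) hdp
  have hM := two_le_rotdPos hd (by omega) hmd
  have hMV : rotdPos d m ≤ V := rotdPos_le hd hdV (by have := h.le; omega)
  have hytail := fun r => rotd_eq_false_of_rotdPos_lt (r := r) hd hmd hmtail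
  rw [lruStep_of_miss hyd hM hMV (by rw [rotd_rotdPos hd, hym]) hytail,
    h.lruStep_snd_of_fst_miss hd hdV hyd]
  refine update_eq_or_critPair hP (rotdPos_le_rotdPos hdp hmd hpm) hMV ?_ ?_ ?_ ?_ <;>
    simp only [update_apply]
  · simp
  · rw [if_neg (by omega), rotd_rotdPos hd, h.fst_p]
  · rw [if_neg (by omega), rotd_rotdPos hd, hym]
  · intro r hr
    rw [if_neg (by omega), hytail r hr]

theorem critPair_lruStep_of_hit (hd : 1 ≤ d) (hdV : d ≤ V) (hdp : d ≠ p) (hyd : y d = true) :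
    CritPair V (lruStep V d y) (lruStep V d z) := by
  rw [lruStep_of_hit hyd, lruStep_of_hit (h.snd_eq_true_of_ne hdp hyd)]
  exact critPair_iff.mpr ⟨_, _, h.rotd_of_hit hd hdV hdp hyd⟩

end IsCritPairAt

/-- Critical-pair preservation under LRU: if `y <_c z`, then for every access depth
`d` the LRU successors satisfy `y' = z'` or `y' <_c z'`. -/
theorem stmt13 (V : ℕ) (y z : ℕ → Bool) (h : CritPair V y z)
    (d : ℕ) (hd1 : 1 ≤ d) (hdV : d ≤ V) :
    lruStep V d y = lruStep V d z ∨ CritPair V (lruStep V d y) (lruStep V d z) := by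
  obtain ⟨p, q, h⟩ := critPair_iff.mp h
  cases hyd : y d
  · exact h.lruStep_eq_or_critPair_of_fst_miss hd1 hdV hyd
  rcases eq_or_ne d p with rfl | hdp
  · exact Or.inl (h.lruStep_p_eq hd1)
  · exact Or.inr (h.critPair_lruStep_of_hit hd1 hdV hdp hyd)
end

section
/- Observer-cost induction for MRU with non-decreasing s: define γ_t(i) recursively by γ_1(k) = s(k) and γ_{t+1}(k) = s(k)(1+γ_t(2)) + S(k-1)γ_t(k) + (1-S(k))γ_t(k+1). If s is non-decreasing (s(j) ≤ s(j+1) for all j), then for all t and all i < j: γ_t(2) ≤ γ_t(i) ≤ γ_t(j) ≤ 1 + γ_t(2). -/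
/-- Observer-cost induction for MRU with non-decreasing `s`: the observer costs
`γ_t(i)` satisfy `γ_1(k) = s(k)` and
`γ_{t+1}(k) = s(k)(1+γ_t(2)) + S(k-1)γ_t(k) + (1-S(k))γ_t(k+1)`.
If `s` is non-decreasing then, for all `t ≥ 1` and all `2 ≤ i < j ≤ V`,
`γ_t(2) ≤ γ_t(i) ≤ γ_t(j) ≤ 1 + γ_t(2)`. -/
theorem stmt15 (V : ℕ) (s : ℕ → ℝ) (hs : ∀ i, 0 ≤ s i)
    (hsupp : ∀ i, V < i → s i = 0)
    (hsum : ∑ j ∈ Finset.Icc 1 V, s j = 1)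
    (hmono : ∀ j, 1 ≤ j → j < V → s j ≤ s (j + 1))
    (γ : ℕ → ℕ → ℝ)
    (hbase : ∀ k, γ 1 k = s k)
    (hrec : ∀ t k, 1 ≤ t →
      γ (t + 1) k = s k * (1 + γ t 2) + cumS s (k - 1) * γ t k
        + (1 - cumS s k) * γ t (k + 1)) :
    ∀ t, 1 ≤ t → ∀ i j, 2 ≤ i → i < j → j ≤ V →
      γ t 2 ≤ γ t i ∧ γ t i ≤ γ t j ∧ γ t j ≤ 1 + γ t 2 := by
  intro t ht i j hi hij hjV
  have hV3 : 3 ≤ V := by omega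
  -- basic facts about cumS
  have hSV : cumS s V = 1 := hsum
  have hSnn : ∀ m, 0 ≤ cumS s m := by
    intro m
    exact Finset.sum_nonneg fun i _ => hs i
  have hSmono : ∀ a b : ℕ, a ≤ b → cumS s a ≤ cumS s b := by
    intro a b hab
    exact Finset.sum_le_sum_of_subset_of_nonneg
      (Finset.Icc_subset_Icc_right hab) (fun i _ _ => hs i)
  have hSle1 : ∀ m, m ≤ V → cumS s m ≤ 1 := by
    intro m hm
    calc cumS s m ≤ cumS s V := hSmono m V hm
    _ = 1 := hSV
  have hstep : ∀ k : ℕ, 1 ≤ k → cumS s k = cumS s (k - 1) + s k := by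
    intro k hk
    obtain ⟨m, rfl⟩ := Nat.exists_eq_add_of_le hk
    simp only [Nat.add_sub_cancel_left]
    have : (1 : ℕ) ≤ m + 1 := by omega
    rw [show 1 + m = m + 1 by ring, cumS, cumS, Finset.sum_Icc_succ_top this]
  have hsle1 : ∀ k, 1 ≤ k → k ≤ V → s k ≤ 1 := by
    intro k hk1 hkV
    have : s k ≤ ∑ j ∈ Finset.Icc 1 V, s j :=
      Finset.single_le_sum (fun i _ => hs i) (Finset.mem_Icc.mpr ⟨hk1, hkV⟩)
    linarith [hsum]
  -- main invariant P t
  have key : ∀ t, 1 ≤ t →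
      (∀ k, 2 ≤ k → k < V → γ t k ≤ γ t (k + 1)) ∧ γ t V ≤ 1 + γ t 2 := by
    intro t ht
    induction t, ht using Nat.le_induction with
    | base =>
      constructor
      · intro k hk2 hkV
        rw [hbase, hbase]
        exact hmono k (by omega) hkV
      · rw [hbase, hbase]
        have h1 : s V ≤ 1 := hsle1 V (by omega) le_rfl
        have h2 : 0 ≤ s 2 := hs 2
        linarith
    | succ t ht ih =>
      obtain ⟨ihm, ihub⟩ := ih
      -- chain: monotonicity over intervals
      have hchain : ∀ a b : ℕ, 2 ≤ a → a ≤ b → b ≤ V → γ t a ≤ γ t b := by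
        intro a b ha hab hbV
        induction b, hab using Nat.le_induction with
        | base => exact le_refl _
        | succ b hb ih2 =>
          have h1 : γ t a ≤ γ t b := ih2 (by omega)
          have h2 : γ t b ≤ γ t (b + 1) := ihm b (by omega) (by omega)
          linarith
      have hub : ∀ k, 2 ≤ k → k ≤ V → γ t k ≤ 1 + γ t 2 := by
        intro k hk2 hkV
        calc γ t k ≤ γ t V := hchain k V hk2 hkV le_rfl
        _ ≤ 1 + γ t 2 := ihub
      constructor
      · -- monotone step
        intro k hk2 hkV
        rw [hrec t k ht, hrec t (k + 1) ht]
        have e1 : cumS s k = cumS s (k - 1) + s k := hstep k (by omega)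
        have e2 : cumS s (k + 1) = cumS s k + s (k + 1) := by
          have := hstep (k + 1) (by omega)
          simpa using this
        have hsk : s k ≤ s (k + 1) := hmono k (by omega) hkV
        have h1 : 0 ≤ (s (k + 1) - s k) * (1 + γ t 2 - γ t (k + 1)) := by
          have := hub (k + 1) (by omega) (by omega)
          have h2 : 0 ≤ s (k + 1) - s k := by linarith
          nlinarith
        have h2 : 0 ≤ cumS s (k - 1) * (γ t (k + 1) - γ t k) := by
          have := ihm k hk2 hkV
          exact mul_nonneg (hSnn (k - 1)) (by linarith)
        have h3 : 0 ≤ (1 - cumS s (k + 1)) * (γ t (k + 1 + 1) - γ t (k + 1)) := by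
          by_cases hcase : k + 1 < V
          · have hm : γ t (k + 1) ≤ γ t (k + 1 + 1) := ihm (k + 1) (by omega) hcase
            have hl : cumS s (k + 1) ≤ 1 := hSle1 (k + 1) (by omega)
            exact mul_nonneg (by linarith) (by linarith)
          · have hVk : k + 1 = V := by omega
            rw [hVk, hSV]
            ring_nf
            simp
        have hkm : (k + 1 : ℕ) - 1 = k := by omega
        rw [hkm, e2, e1]
        rw [e2, e1] at h3
        linarith [h1, h2, h3]
      · -- upper bound step: γ (t+1) V ≤ 1 + γ (t+1) 2
        rw [hrec t V ht, hrec t 2 ht]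
        have eV : cumS s V = cumS s (V - 1) + s V := hstep V (by omega)
        have e2 : cumS s 2 = cumS s 1 + s 2 := by
          have := hstep 2 (by omega)
          simpa using this
        have hz : (1 - cumS s V) * γ t (V + 1) = 0 := by rw [hSV]; ring
        rw [hz]
        have hA1 : 0 ≤ cumS s (V - 1) * ((1 + γ t 2) - γ t V) :=
          mul_nonneg (hSnn (V - 1)) (by linarith [ihub])
        have hA2 : 0 ≤ (1 - cumS s 2) * (γ t 3 - γ t 2) := by
          have hm : γ t 2 ≤ γ t 3 := ihm 2 le_rfl (by omega)
          have hl : cumS s 2 ≤ 1 := hSle1 2 (by omega)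
          exact mul_nonneg (by linarith) (by linarith)
        have hsV : s V = 1 - cumS s (V - 1) := by linarith [eV, hSV]
        have h21 : (2 : ℕ) - 1 = 1 := rfl
        have h3e : γ t (2 + 1) = γ t 3 := rfl
        rw [h21, hsV, h3e, e2]
        rw [e2] at hA2
        linarith [hA1, hA2, hs 2]
  obtain ⟨hm, hub⟩ := key t ht
  have hchain : ∀ a b : ℕ, 2 ≤ a → a ≤ b → b ≤ V → γ t a ≤ γ t b := by
    intro a b ha hab hbV
    induction b, hab using Nat.le_induction with
    | base => exact le_refl _
    | succ b hb ih2 =>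
      have h1 : γ t a ≤ γ t b := ih2 (by omega)
      have h2 : γ t b ≤ γ t (b + 1) := hm b (by omega) (by omega)
      linarith
  refine ⟨hchain 2 i le_rfl hi (by omega), hchain i j hi (le_of_lt hij) hjV, ?_⟩
  calc γ t j ≤ γ t V := hchain j V (by omega) hjV le_rfl
  _ ≤ 1 + γ t 2 := hub
end

section
/- For buffer capacity C = 2 under the LRU Stack Model, the Bellman equation h(j) = 1 - s(j) - λ + S(j-1)·min{0, h(j)} + (1-S(j))·min{0, h(j+1)} (with h(2)=0) is solved by λ = 1 - β(2) and h(j) = β(2) - s(j) - (S(j-1)/(1-S(j-1)))·φ(j)ρ(j) - φ(j+1)ρ(j+1), where β(j) = max_{l≥1} s̄(j, j+l-1), Φ(j) = {l ≥ 1 : ∀k ∈ {0,...,l-1}, s̄(j+k, j+l-1) ≥ β(2)} ∪ {0}, φ(j) = max Φ(j), and ρ(j) = s̄(j, j+φ(j)-1) - β(2) if φ(j) ≠ 0, ρ(j) = β(j) - β(2) otherwise. In particular the bias-optimal average cost is 1 - β(2). -/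
/-- Interval average `s̄(i,j) = (∑_{k=i}^j s k)/(j-i+1)`. -/
noncomputable def sbar (s : ℕ → ℝ) (i j : ℕ) : ℝ :=
  (∑ k ∈ Finset.Icc i j, s k) / ((j : ℝ) - i + 1)

/-- `β(j) = max_{l ≥ 1} s̄(j, j+l-1)`. -/
noncomputable def betaFn (s : ℕ → ℝ) (j : ℕ) : ℝ :=
  sSup {x : ℝ | ∃ l, 1 ≤ l ∧ x = sbar s j (j + l - 1)}

/-- `Φ(j) = {l ≥ 1 : ∀ k < l, s̄(j+k, j+l-1) ≥ β(2)} ∪ {0}`. -/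
def PhiSet (s : ℕ → ℝ) (j : ℕ) : Set ℕ :=
  {0} ∪ {l | 1 ≤ l ∧ ∀ k < l, betaFn s 2 ≤ sbar s (j + k) (j + l - 1)}

/-- `φ(j) = max Φ(j)`. -/
noncomputable def phiFn (s : ℕ → ℝ) (j : ℕ) : ℕ :=
  sSup (PhiSet s j)

/-- `ρ(j) = s̄(j, j+φ(j)-1) - β(2)` if `φ(j) ≠ 0`, else `β(j) - β(2)`. -/
noncomputable def rhoFn (s : ℕ → ℝ) (j : ℕ) : ℝ :=
  if phiFn s j ≠ 0 then sbar s j (j + phiFn s j - 1) - betaFn s 2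
  else betaFn s j - betaFn s 2

/-- The differential cost `h(j)`. -/
noncomputable def hFn (s : ℕ → ℝ) (j : ℕ) : ℝ :=
  betaFn s 2 - s j
    - (cumS s (j - 1) / (1 - cumS s (j - 1))) * (phiFn s j : ℝ) * rhoFn s j
    - (phiFn s (j + 1) : ℝ) * rhoFn s (j + 1)

section Aux
open Finset

lemma sum_split (f : ℕ → ℝ) (a b c : ℕ) (h1 : a ≤ b + 1) (h2 : b ≤ c) :
    ∑ k ∈ Icc a c, f k = (∑ k ∈ Icc a b, f k) + ∑ k ∈ Icc (b+1) c, f k := by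
  have hu : Icc a c = Icc a b ∪ Icc (b+1) c := by
    ext x; simp only [mem_Icc, mem_union]; omega
  rw [hu, Finset.sum_union]
  rw [Finset.disjoint_left]
  intro x hx hx'
  simp only [mem_Icc] at hx hx'
  omega

lemma sbar_le_iff (s : ℕ → ℝ) (b : ℝ) (i j : ℕ) (h : i ≤ j) :
    b ≤ sbar s i j ↔ ((j:ℝ) - i + 1) * b ≤ ∑ k ∈ Finset.Icc i j, s k := by
  have hd : (0:ℝ) < (j:ℝ) - i + 1 := by
    have : (i:ℝ) ≤ j := Nat.cast_le.2 h
    linarith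
  rw [sbar, le_div_iff₀ hd, mul_comm]

lemma sumIcc_le_one (V : ℕ) (s : ℕ → ℝ) (hs : ∀ i, 0 ≤ s i)
    (hsupp : ∀ i, V < i → s i = 0) (hsum : ∑ j ∈ Finset.Icc 1 V, s j = 1)
    (i j : ℕ) (hi : 1 ≤ i) : ∑ k ∈ Finset.Icc i j, s k ≤ 1 := by
  have h1 : ∑ k ∈ Icc i j, s k ≤ ∑ k ∈ Icc 1 (max j V), s k := by
    apply Finset.sum_le_sum_of_subset_of_nonneg
    · intro x hx; simp only [mem_Icc] at *; omega
    · intro x _ _; exact hs x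
  have h2 : ∑ k ∈ Icc 1 (max j V), s k = ∑ k ∈ Icc 1 V, s k := by
    symm
    apply Finset.sum_subset
    · intro x hx; simp only [mem_Icc] at *; omega
    · intro x hx hx'
      simp only [mem_Icc] at hx hx'
      exact hsupp x (by omega)
  rw [h2, hsum] at h1
  exact h1

end Aux

section Main
open Finset

variable {V : ℕ} {s : ℕ → ℝ}

lemma beta_bddAbove (hV : 2 ≤ V) (hs : ∀ i, 0 ≤ s i)
    (hsupp : ∀ i, V < i → s i = 0) (hsum : ∑ j ∈ Finset.Icc 1 V, s j = 1) :
    ∀ x ∈ {x : ℝ | ∃ l, 1 ≤ l ∧ x = sbar s 2 (2 + l - 1)}, x ≤ 1 := by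
  rintro x ⟨l, hl, rfl⟩
  have he : 2 + l - 1 = l + 1 := by omega
  rw [he, sbar]
  have hl' : (1:ℝ) ≤ (l:ℝ) := by exact_mod_cast hl
  have hd : (0:ℝ) < ((l+1 : ℕ):ℝ) - ((2:ℕ):ℝ) + 1 := by push_cast; linarith
  rw [div_le_one hd]
  push_cast
  linarith [sumIcc_le_one V s hs hsupp hsum 2 (l+1) (by norm_num)]

lemma beta_pos (hV : 2 ≤ V) (hs : ∀ i, 0 ≤ s i)
    (hsupp : ∀ i, V < i → s i = 0) (hsum : ∑ j ∈ Finset.Icc 1 V, s j = 1)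
    (hS : ∀ j, j < V → cumS s j < 1) :
    0 < betaFn s 2 := by
  have hs1 : s 1 < 1 := by
    have := hS 1 (by omega)
    rwa [cumS, Finset.Icc_self, Finset.sum_singleton] at this
  have hmem : sbar s 2 (2 + V - 1) ∈ {x : ℝ | ∃ l, 1 ≤ l ∧ x = sbar s 2 (2 + l - 1)} := by
    exact ⟨V, by omega, rfl⟩
  have hle : sbar s 2 (2 + V - 1) ≤ betaFn s 2 :=
    le_csSup ⟨1, beta_bddAbove hV hs hsupp hsum⟩ hmem
  have he : 2 + V - 1 = V + 1 := by omega
  have hsumsplit : ∑ k ∈ Icc 1 (V+1), s k = s 1 + ∑ k ∈ Icc 2 (V+1), s k := by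
    have := sum_split s 1 1 (V+1) (by omega) (by omega)
    simpa using this
  have hVp1 : ∑ k ∈ Icc 1 (V+1), s k = 1 := by
    rw [sum_split s 1 V (V+1) (by omega) (by omega), hsum]
    have : ∑ k ∈ Icc (V+1) (V+1), s k = 0 := by
      rw [Finset.Icc_self, Finset.sum_singleton]
      exact hsupp (V+1) (by omega)
    rw [this]; ring
  have hsum2 : ∑ k ∈ Icc 2 (V+1), s k = 1 - s 1 := by
    rw [hVp1] at hsumsplit; linarith
  have hpos : 0 < sbar s 2 (2 + V - 1) := by
    rw [he, sbar, hsum2]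
    apply div_pos (by linarith)
    have : (2:ℝ) ≤ ((V:ℕ):ℝ) := by exact_mod_cast hV
    push_cast
    linarith
  linarith

lemma phiSet_bdd (hV : 2 ≤ V) (hs : ∀ i, 0 ≤ s i)
    (hsupp : ∀ i, V < i → s i = 0) (hsum : ∑ j ∈ Finset.Icc 1 V, s j = 1)
    (hS : ∀ j, j < V → cumS s j < 1)
    (j : ℕ) (hj : 1 ≤ j) : ∀ l ∈ PhiSet s j, 1 ≤ l → j + l ≤ V + 1 := by
  intro l hl hl1'
  rcases hl with h0 | ⟨hl1, hcond⟩
  · simp only [Set.mem_singleton_iff] at h0; omega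
  by_contra hbig
  have hk := hcond (l-1) (by omega)
  have he1 : j + (l-1) = j + l - 1 := by omega
  rw [he1] at hk
  have hone : sbar s (j + l - 1) (j + l - 1) = s (j + l - 1) := by
    rw [sbar, Finset.Icc_self, Finset.sum_singleton]
    simp
  rw [hone] at hk
  have hz : s (j + l - 1) = 0 := hsupp _ (by omega)
  have := beta_pos hV hs hsupp hsum hS
  rw [hz] at hk
  linarith


lemma natcast_sub_one (a : ℕ) (h : 1 ≤ a) : ((a - 1 : ℕ) : ℝ) = (a:ℝ) - 1 := by
  have : ((a - 1 : ℕ) : ℝ) = ((a:ℕ):ℝ) - ((1:ℕ):ℝ) := Nat.cast_sub h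
  push_cast at this ⊢; linarith

lemma mem_phi_iff (j : ℕ) (hj : 1 ≤ j) (l : ℕ) (hl : 1 ≤ l) :
    l ∈ PhiSet s j ↔
      ∀ k < l, ((l:ℝ) - k) * betaFn s 2 ≤ ∑ m ∈ Finset.Icc (j+k) (j+l-1), s m := by
  have key : ∀ k < l, (betaFn s 2 ≤ sbar s (j+k) (j+l-1) ↔
      ((l:ℝ) - k) * betaFn s 2 ≤ ∑ m ∈ Finset.Icc (j+k) (j+l-1), s m) := by
    intro k hk
    rw [sbar_le_iff s _ _ _ (by omega)]
    have heq : (((j+l-1:ℕ)):ℝ) - ((j+k:ℕ):ℝ) + 1 = (l:ℝ) - k := by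
      rw [natcast_sub_one (j+l) (by omega)]
      push_cast; ring
    rw [heq]
  unfold PhiSet
  simp only [Set.mem_union, Set.mem_singleton_iff, Set.mem_setOf_eq]
  constructor
  · rintro (rfl | ⟨_, hc⟩)
    · omega
    · intro k hk; exact (key k hk).1 (hc k hk)
  · intro h
    exact Or.inr ⟨hl, fun k hk => (key k hk).2 (h k hk)⟩

lemma phiSet_bddAbove (hV : 2 ≤ V) (hs : ∀ i, 0 ≤ s i)
    (hsupp : ∀ i, V < i → s i = 0) (hsum : ∑ j ∈ Finset.Icc 1 V, s j = 1)
    (hS : ∀ j, j < V → cumS s j < 1)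
    (j : ℕ) (hj : 1 ≤ j) : BddAbove (PhiSet s j) := by
  refine ⟨V, fun l hl => ?_⟩
  rcases Nat.eq_zero_or_pos l with rfl | hl1
  · omega
  · have := phiSet_bdd hV hs hsupp hsum hS j hj l hl hl1
    omega

lemma phi_mem (hV : 2 ≤ V) (hs : ∀ i, 0 ≤ s i)
    (hsupp : ∀ i, V < i → s i = 0) (hsum : ∑ j ∈ Finset.Icc 1 V, s j = 1)
    (hS : ∀ j, j < V → cumS s j < 1)
    (j : ℕ) (hj : 1 ≤ j) : phiFn s j ∈ PhiSet s j :=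
  Nat.sSup_mem ⟨0, Or.inl rfl⟩ (phiSet_bddAbove hV hs hsupp hsum hS j hj)

lemma le_phi (hV : 2 ≤ V) (hs : ∀ i, 0 ≤ s i)
    (hsupp : ∀ i, V < i → s i = 0) (hsum : ∑ j ∈ Finset.Icc 1 V, s j = 1)
    (hS : ∀ j, j < V → cumS s j < 1)
    (j : ℕ) (hj : 1 ≤ j) {l : ℕ} (hl : l ∈ PhiSet s j) : l ≤ phiFn s j :=
  le_csSup (phiSet_bddAbove hV hs hsupp hsum hS j hj) hl

lemma F_eq (j : ℕ) (hj : 1 ≤ j) :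
    (phiFn s j : ℝ) * rhoFn s j
      = (∑ k ∈ Finset.Icc j (j + phiFn s j - 1), s k) - (phiFn s j : ℝ) * betaFn s 2 := by
  rcases Nat.eq_zero_or_pos (phiFn s j) with h0 | h1
  · rw [h0]
    have : Finset.Icc j (j + 0 - 1) = ∅ := by
      rw [Finset.Icc_eq_empty_iff]; omega
    rw [this]
    simp
  · rw [rhoFn, if_pos (by omega), sbar]
    have heq : (((j + phiFn s j - 1:ℕ)):ℝ) - (j:ℝ) + 1 = (phiFn s j : ℝ) := by
      rw [natcast_sub_one (j + phiFn s j) (by omega)]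
      push_cast; ring
    rw [heq]
    have hne : (phiFn s j : ℝ) ≠ 0 := by positivity
    field_simp


lemma phi_succ (hV : 2 ≤ V) (hs : ∀ i, 0 ≤ s i)
    (hsupp : ∀ i, V < i → s i = 0) (hsum : ∑ j ∈ Finset.Icc 1 V, s j = 1)
    (hS : ∀ j, j < V → cumS s j < 1)
    (j : ℕ) (hj : 1 ≤ j) (hphi : 1 ≤ phiFn s j) :
    phiFn s (j+1) = phiFn s j - 1 := by
  set l := phiFn s j with hl
  set m := phiFn s (j+1) with hm
  have hlcond := (mem_phi_iff j hj l hphi).1 (phi_mem hV hs hsupp hsum hS j hj)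
  have hA : l - 1 ≤ m := by
    rcases Nat.eq_or_lt_of_le hphi with h1 | h2
    · omega
    · -- l ≥ 2
      apply le_phi hV hs hsupp hsum hS (j+1) (by omega)
      rw [mem_phi_iff (j+1) (by omega) (l-1) (by omega)]
      intro k hk
      have e1 : j + 1 + k = j + (k+1) := by omega
      have e2 : j + 1 + (l-1) - 1 = j + l - 1 := by omega
      rw [e1, e2]
      have := hlcond (k+1) (by omega)
      have ec : ((l - 1 : ℕ) : ℝ) - (k:ℝ) = (l:ℝ) - ((k+1 : ℕ):ℝ) := by
        rw [natcast_sub_one l hphi]; push_cast; ring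
      rw [ec]
      exact this
  have hB : m ≤ l - 1 := by
    by_contra hcon
    have hml : l ≤ m := by omega
    have hm1 : 1 ≤ m := by omega
    have hmcond := (mem_phi_iff (j+1) (by omega) m hm1).1
      (phi_mem hV hs hsupp hsum hS (j+1) (by omega))
    have hmem : m + 1 ∈ PhiSet s j := by
      rw [mem_phi_iff j hj (m+1) (by omega)]
      intro k hk
      have e0 : j + (m+1) - 1 = j + m := by omega
      rw [e0]
      rcases lt_or_ge k l with hkl | hkl
      · have hsplit := sum_split s (j+k) (j+l-1) (j+m) (by omega) (by omega)
        have e1 : j + l - 1 + 1 = j + l := by omega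
        rw [e1] at hsplit
        have h1 := hlcond k hkl
        have h2 := hmcond (l-1) (by omega)
        have e2 : j + 1 + (l-1) = j + l := by omega
        have e3 : j + 1 + m - 1 = j + m := by omega
        rw [e2, e3] at h2
        rw [natcast_sub_one l hphi] at h2
        push_cast
        push_cast at h1 h2
        linarith
      · have h2 := hmcond (k-1) (by omega)
        have e2 : j + 1 + (k-1) = j + k := by omega
        have e3 : j + 1 + m - 1 = j + m := by omega
        rw [e2, e3] at h2
        rw [natcast_sub_one k (by omega)] at h2
        push_cast
        push_cast at h2
        linarith
    have := le_phi hV hs hsupp hsum hS j hj hmem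
    omega
  omega

lemma phi_zero_le (hV : 2 ≤ V) (hs : ∀ i, 0 ≤ s i)
    (hsupp : ∀ i, V < i → s i = 0) (hsum : ∑ j ∈ Finset.Icc 1 V, s j = 1)
    (hS : ∀ j, j < V → cumS s j < 1)
    (j : ℕ) (hj : 1 ≤ j) (hphi : phiFn s j = 0) :
    s j + (phiFn s (j+1) : ℝ) * rhoFn s (j+1) ≤ betaFn s 2 := by
  set m := phiFn s (j+1) with hm
  rcases Nat.eq_zero_or_pos m with hm0 | hm1
  · rw [hm0]
    push_cast
    rw [zero_mul]
    by_contra hcon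
    have h1 : (1:ℕ) ∈ PhiSet s j := by
      rw [mem_phi_iff j hj 1 le_rfl]
      intro k hk
      have hk0 : k = 0 := by omega
      subst hk0
      have e1 : j + 0 = j := by omega
      have e2 : j + 1 - 1 = j := by omega
      rw [e1, e2, Finset.Icc_self, Finset.sum_singleton]
      push_cast
      linarith
    have := le_phi hV hs hsupp hsum hS j hj h1
    omega
  · rw [F_eq (j+1) (by omega)]
    have e0 : j + 1 + m - 1 = j + m := by omega
    rw [e0]
    by_contra hcon
    push_neg at hcon
    have hmcond := (mem_phi_iff (j+1) (by omega) m hm1).1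
      (phi_mem hV hs hsupp hsum hS (j+1) (by omega))
    have hmem : m + 1 ∈ PhiSet s j := by
      rw [mem_phi_iff j hj (m+1) (by omega)]
      intro k hk
      have e1 : j + (m+1) - 1 = j + m := by omega
      rw [e1]
      rcases Nat.eq_zero_or_pos k with hk0 | hk1
      · subst hk0
        have e2 : j + 0 = j := by omega
        rw [e2]
        have hsplit := sum_split s j j (j+m) (by omega) (by omega)
        rw [Finset.Icc_self, Finset.sum_singleton] at hsplit
        push_cast
        linarith
      · have h2 := hmcond (k-1) (by omega)
        have e2 : j + 1 + (k-1) = j + k := by omega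
        have e3 : j + 1 + m - 1 = j + m := by omega
        rw [e2, e3] at h2
        rw [natcast_sub_one k (by omega)] at h2
        push_cast
        push_cast at h2
        linarith
    have := le_phi hV hs hsupp hsum hS j hj hmem
    omega

lemma F_nonneg (hV : 2 ≤ V) (hs : ∀ i, 0 ≤ s i)
    (hsupp : ∀ i, V < i → s i = 0) (hsum : ∑ j ∈ Finset.Icc 1 V, s j = 1)
    (hS : ∀ j, j < V → cumS s j < 1)
    (j : ℕ) (hj : 1 ≤ j) : 0 ≤ (phiFn s j : ℝ) * rhoFn s j := by
  rcases Nat.eq_zero_or_pos (phiFn s j) with h0 | h1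
  · rw [h0]; push_cast; rw [zero_mul]
  · rw [F_eq j hj]
    have := (mem_phi_iff j hj (phiFn s j) h1).1 (phi_mem hV hs hsupp hsum hS j hj) 0 (by omega)
    have e1 : j + 0 = j := by omega
    rw [e1] at this
    push_cast at this
    linarith

lemma phi_Vsucc (hV : 2 ≤ V) (hs : ∀ i, 0 ≤ s i)
    (hsupp : ∀ i, V < i → s i = 0) (hsum : ∑ j ∈ Finset.Icc 1 V, s j = 1)
    (hS : ∀ j, j < V → cumS s j < 1) :
    phiFn s (V+1) = 0 := by
  have hsub : PhiSet s (V+1) = {0} := by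
    apply Set.eq_of_subset_of_subset
    · intro l hl
      rcases Nat.eq_zero_or_pos l with rfl | hl1
      · rfl
      · have := phiSet_bdd hV hs hsupp hsum hS (V+1) (by omega) l hl hl1
        omega
    · intro l hl
      simp only [Set.mem_singleton_iff] at hl
      subst hl
      exact Or.inl rfl
  rw [phiFn, hsub]
  exact csSup_singleton 0


lemma F_rec (hV : 2 ≤ V) (hs : ∀ i, 0 ≤ s i)
    (hsupp : ∀ i, V < i → s i = 0) (hsum : ∑ j ∈ Finset.Icc 1 V, s j = 1)
    (hS : ∀ j, j < V → cumS s j < 1)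
    (j : ℕ) (hj : 1 ≤ j) (hphi : 1 ≤ phiFn s j) :
    (phiFn s j : ℝ) * rhoFn s j
      = s j + (phiFn s (j+1) : ℝ) * rhoFn s (j+1) - betaFn s 2 := by
  have hsucc := phi_succ hV hs hsupp hsum hS j hj hphi
  rw [F_eq j hj, F_eq (j+1) (by omega), hsucc]
  have e1 : j + 1 + (phiFn s j - 1) - 1 = j + phiFn s j - 1 := by omega
  rw [e1]
  have hsplit := sum_split s j j (j + phiFn s j - 1) (by omega) (by omega)
  rw [Finset.Icc_self, Finset.sum_singleton] at hsplit
  rw [natcast_sub_one (phiFn s j) hphi, hsplit]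
  ring

lemma min_h_eq (hV : 2 ≤ V) (hs : ∀ i, 0 ≤ s i)
    (hsupp : ∀ i, V < i → s i = 0) (hsum : ∑ j ∈ Finset.Icc 1 V, s j = 1)
    (hS : ∀ j, j < V → cumS s j < 1)
    (j : ℕ) (hj : 2 ≤ j) (hjV : j ≤ V) :
    min 0 (hFn s j) = -((phiFn s j : ℝ) * rhoFn s j) / (1 - cumS s (j-1)) := by
  have hden : cumS s (j-1) < 1 := hS (j-1) (by omega)
  have hdpos : 0 < 1 - cumS s (j-1) := by linarith
  rcases Nat.eq_zero_or_pos (phiFn s j) with h0 | h1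
  · have hh : hFn s j = betaFn s 2 - s j - (phiFn s (j+1) : ℝ) * rhoFn s (j+1) := by
      rw [hFn, h0]; push_cast; ring
    have hge : 0 ≤ hFn s j := by
      rw [hh]
      have := phi_zero_le hV hs hsupp hsum hS j (by omega) h0
      linarith
    rw [min_eq_left hge, h0]
    push_cast
    rw [zero_mul, neg_zero, zero_div]
  · have hrec := F_rec hV hs hsupp hsum hS j (by omega) h1
    have hh : hFn s j = -((phiFn s j : ℝ) * rhoFn s j) / (1 - cumS s (j-1)) := by
      rw [hFn]
      rw [eq_div_iff (ne_of_gt hdpos)]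
      field_simp
      linear_combination (1 - cumS s (j-1)) * hrec
    have hle : hFn s j ≤ 0 := by
      rw [hh]
      apply div_nonpos_of_nonpos_of_nonneg
      · have := F_nonneg hV hs hsupp hsum hS j (by omega)
        linarith
      · linarith
    rw [min_eq_right hle, hh]

end Main

/-- For buffer capacity `C = 2` under the LRUSM, the Bellman equation
`h(j) = 1 - s(j) - λ + S(j-1)·min{0,h(j)} + (1-S(j))·min{0,h(j+1)}` (normalized by
`h(2) = 0`) is solved by `λ = 1 - β(2)` and the `h` above; in particular the
bias-optimal average cost is `1 - β(2)`. -/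
theorem stmt18 (V : ℕ) (hV : 2 ≤ V) (s : ℕ → ℝ)
    (hs : ∀ i, 0 ≤ s i) (hsupp : ∀ i, V < i → s i = 0)
    (hsum : ∑ j ∈ Finset.Icc 1 V, s j = 1)
    (hS : ∀ j, j < V → cumS s j < 1) :
    ∀ j, 2 ≤ j → j ≤ V →
      hFn s j = 1 - s j - (1 - betaFn s 2)
        + cumS s (j - 1) * min 0 (hFn s j)
        + (1 - cumS s j) * min 0 (hFn s (j + 1)) := by
  intro j hj hjV
  have hden : cumS s (j-1) < 1 := hS (j-1) (by omega)
  have hdne : (1 : ℝ) - cumS s (j-1) ≠ 0 := by linarith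
  have Lj := min_h_eq hV hs hsupp hsum hS j hj hjV
  rw [Lj]
  rcases Nat.lt_or_ge j V with hlt | hge
  · have Lj1 := min_h_eq hV hs hsupp hsum hS (j+1) (by omega) (by omega)
    have e1 : j + 1 - 1 = j := by omega
    rw [e1] at Lj1
    rw [Lj1]
    have hdne2 : (1 : ℝ) - cumS s j ≠ 0 := by
      have := hS j hlt
      linarith
    rw [hFn]
    field_simp
    ring
  · have hjV' : j = V := by omega
    have hz : phiFn s (j+1) = 0 := by
      rw [hjV']; exact phi_Vsucc hV hs hsupp hsum hS
    have hcum : cumS s j = 1 := by rw [hjV']; exact hsum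
    rw [hFn, hz, hcum]
    push_cast
    field_simp
    ring
end

section
/- RMoP optimality for average occupancy in the LRUSM: let q_1 = 1 < q_2 < ... < q_l = V be the values k for which ev_k is a supported efficient point (Pareto-convex policy) in the (occupancy, miss-rate) cost plane, and let q_i < C' ≤ q_{i+1} with C' = γ'q_i + (1-γ')q_{i+1} for some γ' ∈ (0,1]. Then the randomized mixture that, for each item independently per lifetime, applies ev_{q_i} with probability γ' and ev_{q_{i+1}} with probability 1-γ' achieves average occupancy C' and miss rate γ'·(1-S(q_i))/V·V + (1-γ')·(1-S(q_{i+1})), which is the minimum miss rate among all policies with average occupancy C'. In particular, if s is monotonically decreasing then l = V and q_i = i, while if s is monotonically increasing then l = 2, q_1 = 1, q_2 = V. -/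
/-- `k` is a supported efficient point (Pareto-convex policy): no convex combination
of the single-item cost points `(j/V, (1-S(j))/V)` of the policies `ev_j` strictly
dominates the cost point `(k/V, (1-S(k))/V)` of `ev_k`. -/
def IsSEP (V : ℕ) (S : ℕ → ℝ) (k : ℕ) : Prop :=
  k ∈ Finset.Icc 1 V ∧
  ∀ w : ℕ → ℝ, (∀ j, 0 ≤ w j) → (∑ j ∈ Finset.Icc 1 V, w j) = 1 →
    (∑ j ∈ Finset.Icc 1 V, w j * ((j : ℝ) / V)) ≤ (k : ℝ) / V →
    (∑ j ∈ Finset.Icc 1 V, w j * ((1 - S j) / V)) ≤ (1 - S k) / V →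
    (∑ j ∈ Finset.Icc 1 V, w j * ((j : ℝ) / V)) = (k : ℝ) / V ∧
    (∑ j ∈ Finset.Icc 1 V, w j * ((1 - S j) / V)) = (1 - S k) / V

/-!
Write `y j = 1 - S j` for the miss cost of `ev_j`. A supported efficient point `k` lies on or
below every chord of the points `(j, y j)` that straddles it, and conversely any `k` touched by a
supporting line of negative slope is supported. For consecutive supported points `A < B`, let
`j₀` minimise the height of `(j, y j)` above the line through `A` and `B`. If that height were
negative, the line lowered onto `j₀` would make `j₀` supported, so `j₀ < A` or `B < j₀`, and then
the chord inequality at `A` (resp. `B`) forces the height to be nonnegative after all. So every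
point lies above the line through `A` and `B`, and averaging gives the lower bound for every
mixture of mean occupancy `C'`. For decreasing `s` the points are convex and `-s k` is a
supporting slope at each `k < V`; for increasing `s` every interior point lies strictly above the
chord from `1` to `V`.
-/

open Finset

section Mixtures

variable {V : ℕ}

theorem sum_mul_affine {w : ℕ → ℝ} (hw : ∑ j ∈ Icc 1 V, w j = 1) (c m : ℝ) :
    ∑ j ∈ Icc 1 V, w j * (c + m * j) = c + m * ∑ j ∈ Icc 1 V, w j * j := by
  simp only [mul_add, sum_add_distrib, ← sum_mul, hw, one_mul, mul_left_comm _ m, ← mul_sum]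

theorem sum_ite_add_ite_mul {a b : ℕ} (ha : a ∈ Icc 1 V) (hb : b ∈ Icc 1 V) (t u : ℝ)
    (f : ℕ → ℝ) :
    ∑ j ∈ Icc 1 V, ((if j = a then t else 0) + (if j = b then u else 0)) * f j
      = t * f a + u * f b := by
  simp [add_mul, ite_mul, sum_add_distrib, ha, hb]

end Mixtures

section SupportedEfficientPoints

variable {V k : ℕ} {S : ℕ → ℝ}

theorem isSEP_iff : IsSEP V S k ↔ k ∈ Icc 1 V ∧
    ∀ w : ℕ → ℝ, (∀ j, 0 ≤ w j) → ∑ j ∈ Icc 1 V, w j = 1 →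
      ∑ j ∈ Icc 1 V, w j * j ≤ k → ∑ j ∈ Icc 1 V, w j * (1 - S j) ≤ 1 - S k →
      ∑ j ∈ Icc 1 V, w j * j = k ∧ ∑ j ∈ Icc 1 V, w j * (1 - S j) = 1 - S k := by
  refine and_congr_right fun hk => ?_
  have hV : (0 : ℝ) < V := by exact_mod_cast (mem_Icc.1 hk).1.trans (mem_Icc.1 hk).2
  simp only [← mul_div_assoc, ← sum_div, div_le_div_iff_of_pos_right hV,
    div_left_inj' hV.ne']

theorem IsSEP.mix_eq {a b : ℕ} (h : IsSEP V S k) (ha : a ∈ Icc 1 V) (hb : b ∈ Icc 1 V)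
    {t : ℝ} (ht₀ : 0 ≤ t) (ht₁ : t ≤ 1) (hx : t * a + (1 - t) * b ≤ k)
    (hy : t * (1 - S a) + (1 - t) * (1 - S b) ≤ 1 - S k) :
    t * a + (1 - t) * b = k ∧ t * (1 - S a) + (1 - t) * (1 - S b) = 1 - S k := by
  have hw := (isSEP_iff.1 h).2 (fun j => (if j = a then t else 0) + (if j = b then 1 - t else 0))
    (fun j => add_nonneg (by split_ifs <;> linarith) (by split_ifs <;> linarith))
  simp only [sum_ite_add_ite_mul ha hb] at hw
  simpa using hw (by simpa using sum_ite_add_ite_mul ha hb t (1 - t) fun _ => 1) hx hy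

theorem IsSEP.lt_of_lt {j : ℕ} (h : IsSEP V S k) (hj : j ∈ Icc 1 V) (hjk : j < k) :
    S j < S k := by
  by_contra! hle
  have := (h.mix_eq hj hj zero_le_one le_rfl (by simpa using hjk.le)
    (by rw [one_mul, sub_self, zero_mul, add_zero]; linarith)).1
  exact hjk.ne (by simpa using this)

theorem IsSEP.le_chord {a b : ℕ} (h : IsSEP V S k) (ha : a ∈ Icc 1 V) (hb : b ∈ Icc 1 V)
    (hak : a < k) (hkb : k < b) :
    ((b : ℝ) - a) * (1 - S k) ≤ ((b : ℝ) - k) * (1 - S a) + ((k : ℝ) - a) * (1 - S b) := by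
  have hak' : (a : ℝ) < k := by exact_mod_cast hak
  have hkb' : (k : ℝ) < b := by exact_mod_cast hkb
  have hab : (0 : ℝ) < b - a := by linarith
  obtain ⟨t, ht⟩ : ∃ t : ℝ, t = ((b : ℝ) - k) / (b - a) := ⟨_, rfl⟩
  have ht₁ : 1 - t = ((k : ℝ) - a) / (b - a) := by rw [ht]; field_simp; ring
  have hx : t * a + (1 - t) * b = k := by rw [ht₁, ht]; field_simp; ring
  by_contra! hlt
  have hy : t * (1 - S a) + (1 - t) * (1 - S b) < 1 - S k := by
    have hmix : t * (1 - S a) + (1 - t) * (1 - S b)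
        = (((b : ℝ) - k) * (1 - S a) + ((k : ℝ) - a) * (1 - S b)) / (b - a) := by
      rw [ht₁, ht]; field_simp
    rw [hmix, div_lt_iff₀ hab]
    linarith
  have ht₀ : 0 ≤ t := ht ▸ div_nonneg (by linarith) hab.le
  have ht₁' : 0 ≤ 1 - t := ht₁ ▸ div_nonneg (by linarith) hab.le
  exact hy.ne (h.mix_eq ha hb ht₀ (by linarith) hx.le hy.le).2

theorem isSEP_of_supporting_line {m : ℝ} (hk : k ∈ Icc 1 V) (hm : m < 0)
    (h : ∀ j ∈ Icc 1 V, 1 - S k + m * (j - k) ≤ 1 - S j) : IsSEP V S k := by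
  refine isSEP_iff.2 ⟨hk, fun w hw₀ hw₁ hx hy => ?_⟩
  have hline : 1 - S k + m * (∑ j ∈ Icc 1 V, w j * j - k) ≤ ∑ j ∈ Icc 1 V, w j * (1 - S j) := by
    calc 1 - S k + m * (∑ j ∈ Icc 1 V, w j * j - k)
        = ∑ j ∈ Icc 1 V, w j * ((1 - S k - m * k) + m * j) := by
          rw [sum_mul_affine hw₁]; ring
      _ ≤ ∑ j ∈ Icc 1 V, w j * (1 - S j) :=
          sum_le_sum fun j hj => mul_le_mul_of_nonneg_left (by linarith [h j hj]) (hw₀ j)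
  have hprod : m * (∑ j ∈ Icc 1 V, w j * j - k) = 0 :=
    le_antisymm (by linarith) (mul_nonneg_of_nonpos_of_nonpos hm.le (sub_nonpos.2 hx))
  have hx' : ∑ j ∈ Icc 1 V, w j * j = k :=
    sub_eq_zero.1 ((mul_eq_zero.1 hprod).resolve_left hm.ne)
  exact ⟨hx', by rw [hx', sub_self, mul_zero, add_zero] at hline; linarith⟩

theorem chord_le_of_consecutive {A B : ℕ} (hA : IsSEP V S A) (hB : IsSEP V S B) (hAB : A < B)
    (hgap : ∀ k, IsSEP V S k → k ≤ A ∨ B ≤ k) {j : ℕ} (hj : j ∈ Icc 1 V) :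
    ((B : ℝ) - j) * (1 - S A) + ((j : ℝ) - A) * (1 - S B) ≤ ((B : ℝ) - A) * (1 - S j) := by
  let f : ℕ → ℝ := fun x => ((B : ℝ) - A) * (1 - S x) - ((B : ℝ) - x) * (1 - S A)
    - ((x : ℝ) - A) * (1 - S B)
  obtain ⟨j₀, hj₀, hmin⟩ := exists_min_image (Icc 1 V) f ⟨A, hA.1⟩
  suffices 0 ≤ f j₀ by linarith [hmin j hj]
  by_contra! hneg
  have hAB' : (0 : ℝ) < B - A := sub_pos.2 (by exact_mod_cast hAB)
  have hslope : ((1 - S B) - (1 - S A)) / (B - A) < 0 :=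
    div_neg_of_neg_of_pos (by linarith [hB.lt_of_lt hA.1 hAB]) hAB'
  have hsep₀ : IsSEP V S j₀ := by
    refine isSEP_of_supporting_line hj₀ hslope fun i hi => ?_
    have hfi : f j₀ ≤ f i := hmin i hi
    rw [div_mul_eq_mul_div, add_div' _ _ _ hAB'.ne', div_le_iff₀ hAB']
    linarith
  rcases hgap j₀ hsep₀ with hle | hle
  · obtain rfl | hlt := hle.eq_or_lt
    · exact hneg.not_ge (by simp [f])
    · linarith [hA.le_chord hj₀ hB.1 hlt hAB]
  · obtain rfl | hlt := hle.eq_or_lt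
    · exact hneg.not_ge (by simp [f])
    · linarith [hB.le_chord hA.1 hj₀ hAB hlt]

theorem chord_le_mixture_cost {A B : ℕ} (hA : IsSEP V S A) (hB : IsSEP V S B) (hAB : A < B)
    (hgap : ∀ k, IsSEP V S k → k ≤ A ∨ B ≤ k) {w : ℕ → ℝ} (hw₀ : ∀ j, 0 ≤ w j)
    (hw₁ : ∑ j ∈ Icc 1 V, w j = 1) {γ : ℝ} (hx : ∑ j ∈ Icc 1 V, w j * j = γ * A + (1 - γ) * B) :
    γ * (1 - S A) + (1 - γ) * (1 - S B) ≤ ∑ j ∈ Icc 1 V, w j * (1 - S j) := by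
  have hAB' : (0 : ℝ) < B - A := sub_pos.2 (by exact_mod_cast hAB)
  refine le_of_mul_le_mul_left ?_ hAB'
  calc ((B : ℝ) - A) * (γ * (1 - S A) + (1 - γ) * (1 - S B))
      = ∑ j ∈ Icc 1 V, w j * ((B * (1 - S A) - A * (1 - S B)) + ((1 - S B) - (1 - S A)) * j) := by
        rw [sum_mul_affine hw₁, hx]; ring
    _ ≤ ∑ j ∈ Icc 1 V, w j * (((B : ℝ) - A) * (1 - S j)) :=
        sum_le_sum fun j hj => mul_le_mul_of_nonneg_left
          (by linarith [chord_le_of_consecutive hA hB hAB hgap hj]) (hw₀ j)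
    _ = ((B : ℝ) - A) * ∑ j ∈ Icc 1 V, w j * (1 - S j) := by
        rw [mul_sum]; exact sum_congr rfl fun j _ => by ring

end SupportedEfficientPoints

section CumulativeDistribution

variable {s : ℕ → ℝ} {a b : ℕ}

theorem cumS_sub_cumS (hab : a ≤ b) : cumS s b - cumS s a = ∑ t ∈ Ioc a b, s t := by
  have h : ∀ j, cumS s j = ∑ t ∈ Ioc 0 j, s t := fun j => by
    rw [cumS, ← Icc_add_one_left_eq_Ioc, zero_add]
  rw [h, h, ← sum_Ioc_consecutive _ a.zero_le hab, add_sub_cancel_left]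

theorem cumS_sub_cumS_le {c : ℝ} (hab : a ≤ b) (h : ∀ t ∈ Ioc a b, s t ≤ c) :
    cumS s b - cumS s a ≤ ((b : ℝ) - a) * c := by
  have := sum_le_card_nsmul (Ioc a b) s c h
  rwa [Nat.card_Ioc, nsmul_eq_mul, Nat.cast_sub hab, ← cumS_sub_cumS hab] at this

theorem le_cumS_sub_cumS {c : ℝ} (hab : a ≤ b) (h : ∀ t ∈ Ioc a b, c ≤ s t) :
    ((b : ℝ) - a) * c ≤ cumS s b - cumS s a := by
  have := card_nsmul_le_sum (Ioc a b) s c h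
  rwa [Nat.card_Ioc, nsmul_eq_mul, Nat.cast_sub hab, ← cumS_sub_cumS hab] at this

end CumulativeDistribution

theorem isSEP_cumS_of_antitoneOn {V k : ℕ} {s : ℕ → ℝ} (hs : AntitoneOn s (Set.Icc 1 V))
    (hk : k ∈ Icc 1 V) (hpos : 0 < s k) : IsSEP V (cumS s) k := by
  refine isSEP_of_supporting_line hk (neg_neg_of_pos hpos) fun j hj => ?_
  rw [mem_Icc] at hk hj
  rcases le_total j k with hjk | hkj
  · have := le_cumS_sub_cumS (s := s) (c := s k) hjk fun t ht => by
      rw [mem_Ioc] at ht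
      exact hs ⟨by omega, by omega⟩ hk ht.2
    linarith
  · have := cumS_sub_cumS_le (s := s) (c := s k) hkj fun t ht => by
      rw [mem_Ioc] at ht
      exact hs hk ⟨by omega, by omega⟩ ht.1.le
    linarith

theorem not_isSEP_cumS_of_strictMonoOn {V k : ℕ} {s : ℕ → ℝ} (hs : StrictMonoOn s (Set.Icc 1 V))
    (hk₁ : 1 < k) (hkV : k < V) : ¬IsSEP V (cumS s) k := by
  intro hk
  have hchord := hk.le_chord (mem_Icc.2 ⟨le_rfl, by omega⟩) (mem_Icc.2 ⟨by omega, le_rfl⟩) hk₁ hkV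
  rw [Nat.cast_one] at hchord
  have hlow : cumS s k - cumS s 1 ≤ ((k : ℝ) - 1) * s k := by
    simpa using cumS_sub_cumS_le hk₁.le fun t ht => by
      rw [mem_Ioc] at ht
      exact hs.monotoneOn ⟨by omega, by omega⟩ ⟨by omega, by omega⟩ ht.2
  have hhigh : ((V : ℝ) - k) * s (k + 1) ≤ cumS s V - cumS s k :=
    le_cumS_sub_cumS hkV.le fun t ht => by
      rw [mem_Ioc] at ht
      exact hs.monotoneOn ⟨by omega, by omega⟩ ⟨by omega, by omega⟩ ht.1
  have hstep : s k < s (k + 1) := hs ⟨by omega, by omega⟩ ⟨by omega, by omega⟩ k.lt_succ_self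
  have hk₁' : (1 : ℝ) < k := by exact_mod_cast hk₁
  have hkV' : (k : ℝ) < V := by exact_mod_cast hkV
  linarith [mul_le_mul_of_nonneg_left hlow (by linarith : (0 : ℝ) ≤ V - k),
    mul_le_mul_of_nonneg_left hhigh (by linarith : (0 : ℝ) ≤ k - 1),
    mul_pos (mul_pos (by linarith : (0 : ℝ) < V - k) (by linarith : (0 : ℝ) < k - 1))
      (sub_pos.2 hstep)]

section Enumerations

variable {l : ℕ} {q : ℕ → ℕ}

theorem StrictMonoOn.apply_add_sub_le (hq : StrictMonoOn q (Set.Icc 1 l)) {a b : ℕ} (ha : 1 ≤ a)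
    (hab : a ≤ b) (hb : b ≤ l) : q a + (b - a) ≤ q b := by
  induction b, hab using Nat.le_induction with
  | base => simp
  | succ n hn ih =>
    have := hq ⟨by omega, by omega⟩ ⟨by omega, hb⟩ n.lt_succ_self
    have := ih (by omega)
    omega

theorem eq_self_of_strictMonoOn_of_surjOn {V : ℕ} (hq : StrictMonoOn q (Set.Icc 1 l))
    (hq₁ : q 1 = 1) (hql : q l = V) (hsurj : Set.SurjOn q (Set.Icc 1 l) (Set.Icc 1 V)) :
    l = V ∧ ∀ i ∈ Set.Icc 1 l, q i = i := by
  have hle : l ≤ V := by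
    rcases Nat.eq_zero_or_pos l with rfl | hl
    · exact Nat.zero_le V
    · have := hq.apply_add_sub_le le_rfl hl le_rfl
      omega
  have hge : V ≤ l := by
    simpa using card_le_card_of_surjOn q (s := Icc 1 l) (t := Icc 1 V) (by simpa using hsurj)
  refine ⟨le_antisymm hle hge, fun i hi => ?_⟩
  have h₁ := hq.apply_add_sub_le le_rfl hi.1 hi.2
  have h₂ := hq.apply_add_sub_le hi.1 hi.2 le_rfl
  omega

end Enumerations

theorem stmt19_general (V l : ℕ) (s : ℕ → ℝ)
    (hs : ∀ i, 0 ≤ s i)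
    (q : ℕ → ℕ)
    (hmono : ∀ a b, 1 ≤ a → a < b → b ≤ l → q a < q b)
    (hq1 : q 1 = 1) (hql : q l = V)
    (hSEP : ∀ k, IsSEP V (cumS s) k ↔ ∃ i, 1 ≤ i ∧ i ≤ l ∧ q i = k)
    (i : ℕ) (hi : 1 ≤ i) (hil : i < l)
    (γ' C' : ℝ)
    (hC' : C' = γ' * (q i : ℝ) + (1 - γ') * (q (i + 1) : ℝ)) :
    (∀ w : ℕ → ℝ, (∀ k, 0 ≤ w k) → (∑ k ∈ Finset.Icc 1 V, w k) = 1 →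
      (∑ k ∈ Finset.Icc 1 V, w k * (k : ℝ)) = C' →
      γ' * (1 - cumS s (q i)) + (1 - γ') * (1 - cumS s (q (i + 1)))
        ≤ ∑ k ∈ Finset.Icc 1 V, w k * (1 - cumS s k))
    ∧ ((∀ a b, 1 ≤ a → a < b → b ≤ V → s b < s a) →
        l = V ∧ ∀ i', 1 ≤ i' → i' ≤ l → q i' = i')
    ∧ ((∀ a b, 1 ≤ a → a < b → b ≤ V → s a < s b) →
        l = 2 ∧ q 1 = 1 ∧ q 2 = V) := by
  have hq : StrictMonoOn q (Set.Icc 1 l) := fun a ha b hb hab => hmono a b ha.1 hab hb.2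
  have hsep : ∀ j ∈ Set.Icc 1 l, IsSEP V (cumS s) (q j) := fun j hj =>
    (hSEP _).2 ⟨j, hj.1, hj.2, rfl⟩
  refine ⟨fun w hw₀ hw₁ hx => ?_, fun hdec => ?_, fun hinc => ?_⟩
  · refine chord_le_mixture_cost (hsep i ⟨hi, hil.le⟩) (hsep (i + 1) ⟨by omega, hil⟩)
      (hmono i (i + 1) hi i.lt_succ_self hil) (fun k hk => ?_) hw₀ hw₁ (hx.trans hC')
    obtain ⟨j, hj₁, hjl, rfl⟩ := (hSEP k).1 hk
    rcases le_or_gt j i with hji | hij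
    · exact Or.inl (hq.monotoneOn ⟨hj₁, hjl⟩ ⟨hi, hil.le⟩ hji)
    · exact Or.inr (hq.monotoneOn ⟨by omega, hil⟩ ⟨hj₁, hjl⟩ hij)
  · have hanti : StrictAntiOn s (Set.Icc 1 V) := fun a ha b hb hab => hdec a b ha.1 hab hb.2
    have hsurj : Set.SurjOn q (Set.Icc 1 l) (Set.Icc 1 V) := fun k hk => by
      suffices IsSEP V (cumS s) k by
        obtain ⟨j, hj₁, hjl, rfl⟩ := (hSEP k).1 this
        exact ⟨j, ⟨hj₁, hjl⟩, rfl⟩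
      rcases hk.2.eq_or_lt with rfl | hkV
      · exact hql ▸ hsep l ⟨by omega, le_rfl⟩
      · exact isSEP_cumS_of_antitoneOn hanti.antitoneOn (mem_Icc.2 hk)
          ((hs (k + 1)).trans_lt (hanti hk ⟨by omega, hkV⟩ k.lt_succ_self))
    obtain ⟨hlV, hid⟩ := eq_self_of_strictMonoOn_of_surjOn hq hq1 hql hsurj
    exact ⟨hlV, fun j hj₁ hjl => hid j ⟨hj₁, hjl⟩⟩
  · have hl : l = 2 := by
      by_contra hl
      have h₁₂ := hmono 1 2 le_rfl one_lt_two (by omega)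
      have h₂l := hmono 2 l one_le_two (by omega) le_rfl
      exact not_isSEP_cumS_of_strictMonoOn (fun a ha b hb hab => hinc a b ha.1 hab hb.2)
        (hq1 ▸ h₁₂) (hql ▸ h₂l) (hsep 2 ⟨one_le_two, by omega⟩)
    exact ⟨hl, hq1, hl ▸ hql⟩

/-- RMoP optimality for average occupancy in the LRUSM.  Let `q 1 = 1 < … < q l = V`
enumerate the `ev_k` that are supported efficient points, and `q i < C' ≤ q (i+1)`
with `C' = γ'·q i + (1-γ')·q (i+1)`, `γ' ∈ (0,1]`.  The randomized mixture applying
`ev_{q i}` with probability `γ'` and `ev_{q (i+1)}` with probability `1-γ'` to every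
item has average occupancy `C'` and miss rate
`γ'(1-S(q i)) + (1-γ')(1-S(q (i+1)))`, which is minimal among all policies
(mixtures `w` of the `ev_k` over the items) with average occupancy `C'`.
Moreover if `s` is monotonically decreasing then `l = V` and `q i = i`, and if `s`
is monotonically increasing then `l = 2`, `q 1 = 1`, `q 2 = V`. -/
theorem stmt19 (V l : ℕ) (hV : 1 ≤ V) (s : ℕ → ℝ)
    (hs : ∀ i, 0 ≤ s i) (hsum : ∑ j ∈ Finset.Icc 1 V, s j = 1)
    (q : ℕ → ℕ) (hl : 1 ≤ l)
    (hmono : ∀ a b, 1 ≤ a → a < b → b ≤ l → q a < q b)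
    (hq1 : q 1 = 1) (hql : q l = V)
    (hSEP : ∀ k, IsSEP V (cumS s) k ↔ ∃ i, 1 ≤ i ∧ i ≤ l ∧ q i = k)
    (i : ℕ) (hi : 1 ≤ i) (hil : i < l)
    (γ' C' : ℝ) (hγ0 : 0 < γ') (hγ1 : γ' ≤ 1)
    (hC' : C' = γ' * (q i : ℝ) + (1 - γ') * (q (i + 1) : ℝ))
    (hC'lo : (q i : ℝ) < C') (hC'hi : C' ≤ (q (i + 1) : ℝ)) :
    (∀ w : ℕ → ℝ, (∀ k, 0 ≤ w k) → (∑ k ∈ Finset.Icc 1 V, w k) = 1 →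
      (∑ k ∈ Finset.Icc 1 V, w k * (k : ℝ)) = C' →
      γ' * (1 - cumS s (q i)) + (1 - γ') * (1 - cumS s (q (i + 1)))
        ≤ ∑ k ∈ Finset.Icc 1 V, w k * (1 - cumS s k))
    ∧ ((∀ a b, 1 ≤ a → a < b → b ≤ V → s b < s a) →
        l = V ∧ ∀ i', 1 ≤ i' → i' ≤ l → q i' = i')
    ∧ ((∀ a b, 1 ≤ a → a < b → b ≤ V → s a < s b) →
        l = 2 ∧ q 1 = 1 ∧ q 2 = V) :=
  stmt19_general V l s hs q hmono hq1 hql hSEP i hi hil γ' C' hC'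
end
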